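/- Fix α, β > 0 and set r = √(α/β). Let A ≥ 0 and ε > 0 with εA < 2αr/(3√3). Let V : [0, ∞) → ℝ^d be an (ε, A)-characteristic velocity with |V(0)| > ρ₃^ε(A). Then for every t > 0, ρ₂^ε(−A) ≤ |V(t)| < |V(0)|. -/

import Mathlib

open Real Set
open scoped InnerProductSpace

/-! Along a characteristic, `ε ⟪V, V'⟫ = |V| (α - β|V|²)|V| + O(ε A |V|)`, so `|V|²` strictly
decreases at every level `ρ` with `εA + (α - βρ²)ρ < 0` and strictly increases at every level with
`-εA + (α - βρ²)ρ > 0`. The cubic `ρ ↦ (α - βρ²)ρ` is strictly decreasing on `[r/√3, ∞)`, so the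
first holds at every level above `ρ₃` and the second at every level in `[r/√3, ρ₂)`. A fencing
argument for `|V|²` then keeps `|V(t)|` below `|V(0)|` and above every level in `(r/√3, ρ₂)`, and
the condition `εA < 2αr/(3√3)` says exactly that `ρ₂ > r/√3`, so this interval is nonempty. -/

lemma strictAntiOn_sub_mul_sq_mul {α β m : ℝ} (hβ : 0 < β) (hm : 0 ≤ m)
    (hαm : α ≤ 3 * β * m ^ 2) : StrictAntiOn (fun ρ : ℝ => (α - β * ρ ^ 2) * ρ) (Ici m) := by
  intro x hx y hy hxy
  simp only [mem_Ici] at hx hy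
  have hcoef : α < β * (x ^ 2 + x * y + y ^ 2) := by
    nlinarith [mul_le_mul hx hx hm (hm.trans hx), mul_le_mul hx hy hm (hm.trans hx),
      mul_lt_mul' hy (hx.trans_lt hxy) hm (hm.trans_lt (hx.trans_lt hxy))]
  nlinarith [mul_pos (sub_pos.2 hxy) (sub_pos.2 hcoef)]

lemma abs_inner_sub_mul_norm_sq_le {E : Type*} [NormedAddCommGroup E] [InnerProductSpace ℝ E]
    {v w : E} {c A : ℝ} (h : ‖w - c • v‖ ≤ A) : |⟪v, w⟫_ℝ - c * ‖v‖ ^ 2| ≤ ‖v‖ * A := by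
  rw [← real_inner_self_eq_norm_sq, ← real_inner_smul_right, ← inner_sub_right]
  exact (abs_real_inner_le_norm _ _).trans (mul_le_mul_of_nonneg_left h (norm_nonneg _))

/-- An `(ε, A)`-characteristic velocity, with its derivative `V'` (one-sided at `0`) as data. -/
structure IsCharacteristicVelocity {E : Type*} [NormedAddCommGroup E] [InnerProductSpace ℝ E]
    (α β ε A : ℝ) (V V' : ℝ → E) : Prop where
  hasDerivWithinAt : ∀ t ∈ Ici (0 : ℝ), HasDerivWithinAt V (V' t) (Ici 0) t
  norm_sub_le : ∀ t ∈ Ici (0 : ℝ), ‖V' t - ((1 / ε) * (α - β * ‖V t‖ ^ 2)) • V t‖ ≤ A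

namespace IsCharacteristicVelocity

variable {E : Type*} [NormedAddCommGroup E] [InnerProductSpace ℝ E] {V V' : ℝ → E}
  {α β ε A ρ t : ℝ}

lemma bound_nonneg (hV : IsCharacteristicVelocity α β ε A V V') : 0 ≤ A :=
  (norm_nonneg _).trans (hV.norm_sub_le 0 self_mem_Ici)

lemma continuousOn_norm_sq (hV : IsCharacteristicVelocity α β ε A V V') :
    ContinuousOn (‖V ·‖ ^ 2) (Ici 0) :=
  ContinuousOn.pow (ContinuousOn.norm fun t ht => (hV.hasDerivWithinAt t ht).continuousWithinAt) 2

lemma hasDerivWithinAt_norm_sq (hV : IsCharacteristicVelocity α β ε A V V') (ht : 0 ≤ t) :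
    HasDerivWithinAt (‖V ·‖ ^ 2) (2 * ⟪V t, V' t⟫_ℝ) (Ici t) t :=
  ((hV.hasDerivWithinAt t ht).mono (Ici_subset_Ici.2 ht)).norm_sq

lemma hasDerivAt_norm_sq (hV : IsCharacteristicVelocity α β ε A V V') (ht : 0 < t) :
    HasDerivAt (‖V ·‖ ^ 2) (2 * ⟪V t, V' t⟫_ℝ) t :=
  ((hV.hasDerivWithinAt t ht.le).hasDerivAt (Ici_mem_nhds ht)).norm_sq

lemma abs_inner_sub_le (hV : IsCharacteristicVelocity α β ε A V V') (hε : 0 < ε) (ht : 0 ≤ t) :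
    |ε * ⟪V t, V' t⟫_ℝ - ‖V t‖ * ((α - β * ‖V t‖ ^ 2) * ‖V t‖)| ≤ ‖V t‖ * (ε * A) := by
  have h := abs_inner_sub_mul_norm_sq_le (hV.norm_sub_le t ht)
  have hscale : ε * ⟪V t, V' t⟫_ℝ - ‖V t‖ * ((α - β * ‖V t‖ ^ 2) * ‖V t‖)
      = ε * (⟪V t, V' t⟫_ℝ - (1 / ε) * (α - β * ‖V t‖ ^ 2) * ‖V t‖ ^ 2) := by
    field_simp
  rw [hscale, abs_mul, abs_of_pos hε]
  nlinarith

lemma inner_neg_of_norm_eq (hV : IsCharacteristicVelocity α β ε A V V') (hε : 0 < ε)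
    (ht : 0 ≤ t) (hρ : ‖V t‖ = ρ) (h : ε * A + (α - β * ρ ^ 2) * ρ < 0) :
    ⟪V t, V' t⟫_ℝ < 0 := by
  have hρ0 : 0 < ρ := by
    refine lt_of_le_of_ne (hρ ▸ norm_nonneg _) fun h0 => ?_
    subst h0
    nlinarith [hV.bound_nonneg]
  have hbound := (abs_le.1 (hV.abs_inner_sub_le hε ht)).2
  rw [hρ] at hbound
  nlinarith [mul_neg_of_pos_of_neg hρ0 h]

lemma inner_pos_of_norm_eq (hV : IsCharacteristicVelocity α β ε A V V') (hε : 0 < ε)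
    (ht : 0 ≤ t) (hρ : ‖V t‖ = ρ) (h : 0 < -(ε * A) + (α - β * ρ ^ 2) * ρ) :
    0 < ⟪V t, V' t⟫_ℝ := by
  have hρ0 : 0 < ρ := by
    refine lt_of_le_of_ne (hρ ▸ norm_nonneg _) fun h0 => ?_
    subst h0
    nlinarith [hV.bound_nonneg]
  have hbound := (abs_le.1 (hV.abs_inner_sub_le hε ht)).1
  rw [hρ] at hbound
  nlinarith [mul_pos hρ0 h]

lemma norm_le_norm_zero (hV : IsCharacteristicVelocity α β ε A V V') (hε : 0 < ε)
    (h0 : ε * A + (α - β * ‖V 0‖ ^ 2) * ‖V 0‖ < 0) (ht : 0 ≤ t) : ‖V t‖ ≤ ‖V 0‖ := by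
  have hsq : ‖V t‖ ^ 2 ≤ ‖V 0‖ ^ 2 := by
    refine image_le_of_deriv_right_lt_deriv_boundary (B := fun _ => ‖V 0‖ ^ 2)
      (hV.continuousOn_norm_sq.mono Icc_subset_Ici_self)
      (fun x hx => hV.hasDerivWithinAt_norm_sq hx.1) le_rfl (fun _ => hasDerivAt_const _ _)
      (fun x hx hx0 => ?_) ⟨ht, le_rfl⟩
    have hnorm : ‖V x‖ = ‖V 0‖ := (sq_eq_sq₀ (norm_nonneg _) (norm_nonneg _)).1 hx0
    linarith [hV.inner_neg_of_norm_eq hε hx.1 hnorm h0]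
  exact (sq_le_sq₀ (norm_nonneg _) (norm_nonneg _)).1 hsq

/-- A return to the initial speed at `t > 0` would make `t` an interior maximum of `|V|²`,
where the speed is strictly decreasing. -/
lemma norm_lt_norm_zero (hV : IsCharacteristicVelocity α β ε A V V') (hε : 0 < ε)
    (h0 : ε * A + (α - β * ‖V 0‖ ^ 2) * ‖V 0‖ < 0) (ht : 0 < t) : ‖V t‖ < ‖V 0‖ := by
  refine (hV.norm_le_norm_zero hε h0 ht.le).lt_of_ne fun heq => ?_
  have hmax : IsLocalMax (‖V ·‖ ^ 2) t := by
    filter_upwards [Ici_mem_nhds ht] with s hs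
    rw [heq]
    gcongr
    exact hV.norm_le_norm_zero hε h0 hs
  have hderiv := hmax.hasDerivAt_eq_zero (hV.hasDerivAt_norm_sq ht)
  linarith [hV.inner_neg_of_norm_eq hε ht.le heq h0]

lemma le_norm (hV : IsCharacteristicVelocity α β ε A V V') (hε : 0 < ε) (hρ : 0 ≤ ρ)
    (hρ0 : ρ ≤ ‖V 0‖) (h : 0 < -(ε * A) + (α - β * ρ ^ 2) * ρ) (ht : 0 ≤ t) : ρ ≤ ‖V t‖ := by
  have hsq : -‖V t‖ ^ 2 ≤ -ρ ^ 2 := by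
    refine image_le_of_deriv_right_lt_deriv_boundary (B := fun _ => -ρ ^ 2)
      (hV.continuousOn_norm_sq.mono Icc_subset_Ici_self).neg
      (fun x hx => (hV.hasDerivWithinAt_norm_sq hx.1).neg) ?_ (fun _ => hasDerivAt_const _ _)
      (fun x hx hx0 => ?_) ⟨ht, le_rfl⟩
    · exact neg_le_neg (pow_le_pow_left₀ hρ hρ0 2)
    · have hnorm : ‖V x‖ = ρ := (sq_eq_sq₀ (norm_nonneg _) hρ).1 (neg_inj.1 hx0)
      linarith [hV.inner_pos_of_norm_eq hε hx.1 hnorm h]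
  exact (sq_le_sq₀ hρ (norm_nonneg _)).1 (neg_le_neg_iff.1 hsq)

end IsCharacteristicVelocity

theorem stmt10_general (d : ℕ) (α β ε A : ℝ) (hα : 0 < α) (hβ : 0 < β) (hε : 0 < ε)
    (r : ℝ) (hr : r = Real.sqrt (α / β))
    (hεA : ε * A < 2 * α * r / (3 * Real.sqrt 3))
    (V V' : ℝ → EuclideanSpace ℝ (Fin d))
    (hVderiv : ∀ t ∈ Set.Ici (0:ℝ), HasDerivWithinAt V (V' t) (Set.Ici 0) t)
    (hchar : ∀ t ∈ Set.Ici (0:ℝ),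
      ‖V' t - ((1 / ε) * (α - β * ‖V t‖ ^ 2)) • V t‖ ≤ A)
    (ρ₂ : ℝ) (hρ₂mem : r / Real.sqrt 3 ≤ ρ₂ ∧ ρ₂ ≤ r)
    (hρ₂ : -(ε * A) + (α - β * ρ₂ ^ 2) * ρ₂ = 0)
    (ρ₃ : ℝ) (hρ₃r : r ≤ ρ₃) (hρ₃ : ε * A + (α - β * ρ₃ ^ 2) * ρ₃ = 0)
    (hV0 : ρ₃ < ‖V 0‖) :
    ∀ t, 0 < t → ρ₂ ≤ ‖V t‖ ∧ ‖V t‖ < ‖V 0‖ := by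
  have hV : IsCharacteristicVelocity α β ε A V V' := ⟨hVderiv, hchar⟩
  have hr0 : 0 ≤ r := hr ▸ sqrt_nonneg _
  have hβr : β * r ^ 2 = α := by rw [hr, sq_sqrt (div_pos hα hβ).le]; field_simp
  set m := r / √3 with hm
  clear_value m
  have hm0 : 0 ≤ m := by rw [hm]; positivity
  have hm2 : 3 * m ^ 2 = r ^ 2 := by rw [hm, div_pow, sq_sqrt zero_le_three]; field_simp
  have hmr : m ≤ r := hm ▸ div_le_self hr0 (one_le_sqrt.2 (by norm_num))
  have hanti := strictAntiOn_sub_mul_sq_mul hβ hm0 (by nlinarith : α ≤ 3 * β * m ^ 2)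
  -- the cubic takes the value `2αr/(3√3)` at `m`
  have hmρ₂ : m < ρ₂ := hρ₂mem.1.lt_of_ne fun h => by
    rw [← h] at hρ₂
    have hβm : 3 * (β * m ^ 2) = α := by linear_combination β * hm2 + hβr
    have hεAm : ε * A = 2 * α / 3 * m := by linear_combination -hρ₂ - m / 3 * hβm
    rw [hm] at hεAm
    linarith [show 2 * α * r / (3 * √3) = 2 * α / 3 * (r / √3) by ring]
  have hdecay : ε * A + (α - β * ‖V 0‖ ^ 2) * ‖V 0‖ < 0 := by
    have := hanti (hmr.trans hρ₃r) (hmr.trans (hρ₃r.trans hV0.le)) hV0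
    simp only at this
    linarith
  intro t ht
  refine ⟨?_, hV.norm_lt_norm_zero hε hdecay ht⟩
  by_contra! hlt
  obtain ⟨c, hc, hcρ₂⟩ := exists_between (max_lt hlt hmρ₂)
  have hmc : m ≤ c := (le_max_right _ _).trans hc.le
  have hgrowth : 0 < -(ε * A) + (α - β * c ^ 2) * c := by
    have := hanti hmc (hmc.trans hcρ₂.le) hcρ₂
    simp only at this
    linarith
  have := hV.le_norm hε (hm0.trans hmc)
    (hcρ₂.le.trans (hρ₂mem.2.trans (hρ₃r.trans hV0.le))) hgrowth ht.le
  linarith [le_max_left ‖V t‖ m]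

/-- Fix `α, β > 0`, `r = √(α/β)`, `A ≥ 0`, `ε > 0` with
`εA < 2αr/(3√3)`. Let `ρ₂ ∈ [r/√3, r]` be the larger zero of
`ρ ↦ −εA + (α − βρ²)ρ` in `[0, r]`, and `ρ₃ ∈ [r,∞)` the zero of
`ρ ↦ εA + (α − βρ²)ρ`. If `V` is an `(ε,A)`-characteristic velocity with
`|V(0)| > ρ₃`, then `ρ₂ ≤ |V(t)| < |V(0)|` for all `t > 0`. -/
theorem stmt10 (d : ℕ) (α β ε A : ℝ) (hα : 0 < α) (hβ : 0 < β) (hε : 0 < ε)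
    (hA : 0 ≤ A) (r : ℝ) (hr : r = Real.sqrt (α / β))
    (hεA : ε * A < 2 * α * r / (3 * Real.sqrt 3))
    (V V' : ℝ → EuclideanSpace ℝ (Fin d))
    (hV'cont : ContinuousOn V' (Set.Ici 0))
    (hVderiv : ∀ t ∈ Set.Ici (0:ℝ), HasDerivWithinAt V (V' t) (Set.Ici 0) t)
    (hchar : ∀ t ∈ Set.Ici (0:ℝ),
      ‖V' t - ((1 / ε) * (α - β * ‖V t‖ ^ 2)) • V t‖ ≤ A)
    (ρ₂ : ℝ) (hρ₂mem : r / Real.sqrt 3 ≤ ρ₂ ∧ ρ₂ ≤ r)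
    (hρ₂ : -(ε * A) + (α - β * ρ₂ ^ 2) * ρ₂ = 0)
    (ρ₃ : ℝ) (hρ₃r : r ≤ ρ₃) (hρ₃ : ε * A + (α - β * ρ₃ ^ 2) * ρ₃ = 0)
    (hV0 : ρ₃ < ‖V 0‖) :
    ∀ t, 0 < t → ρ₂ ≤ ‖V t‖ ∧ ‖V t‖ < ‖V 0‖ :=
  stmt10_general d α β ε A hα hβ hε r hr hεA V V' hVderiv hchar ρ₂ hρ₂mem hρ₂ ρ₃ hρ₃r hρ₃ hV0
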